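/- Let R be a commutative ring and n a natural number. The substitution ring homomorphism from R[[c₁, …, cₙ]] to R[[t₁, …, tₙ]] sending cᵢ to the i-th elementary symmetric polynomial eᵢ(t₁, …, tₙ) (for 1 ≤ i ≤ n) is injective. -/

import Mathlib

/-- Substitution of multivariate polynomials (each with zero constant term) into a
multivariate formal power series, defined coefficientwise: only source monomials of
total degree at most the total degree of the target monomial can contribute, and these
form a finite set. -/
noncomputable def substPowerSeries {R : Type*} [CommRing R] {σ τ : Type*}
    [Fintype σ] [DecidableEq σ] (a : σ → MvPolynomial τ R)
    (f : MvPowerSeries σ R) : MvPowerSeries τ R :=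
  fun d : τ →₀ ℕ =>
    ∑ e ∈ Finset.Iic (Finsupp.equivFunOnFinite.symm fun _ : σ => d.sum fun _ k => k),
      MvPowerSeries.coeff e f * MvPolynomial.coeff d (∏ i, a i ^ e i)

/-! Give the variable `cᵢ` the weight `i`. As `eᵢ` is homogeneous of degree `i`, a monomial
`cᵉ` goes to a homogeneous polynomial whose degree is the weight of `e`. So the coefficients of
degree `m` of the image of `f` only see the weight-`m` part of `f`, which is a polynomial, and that
part is sent to the degree-`m` part of the image. If the image of `f` vanishes, every weight-`m`
part of `f` is therefore killed by the polynomial substitution `cᵢ ↦ eᵢ`, which is injective by the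
fundamental theorem of symmetric polynomials. -/

open MvPolynomial Finsupp

namespace MvPolynomial

variable {R σ τ : Type*} [CommSemiring R]

theorem isHomogeneous_esymm [Fintype σ] (k : ℕ) : (esymm σ R k).IsHomogeneous k := by
  rw [esymm_eq_sum_subtype]
  refine IsHomogeneous.sum _ _ _ fun t _ => ?_
  simpa [t.2] using IsHomogeneous.prod (t : Finset σ) (fun i => (X i : MvPolynomial σ R))
    (fun _ => 1) (fun i _ => isHomogeneous_X R i)

variable {a : σ → MvPolynomial τ R} {w : σ → ℕ}

theorem isHomogeneous_aeval_monomial (ha : ∀ i, (a i).IsHomogeneous (w i))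
    (e : σ →₀ ℕ) (c : R) :
    (aeval a (monomial e c)).IsHomogeneous (weight w e) := by
  rw [aeval_monomial, algebraMap_eq, weight_apply]
  refine IsHomogeneous.C_mul ?_ c
  simp_rw [Finsupp.prod, Finsupp.sum, smul_eq_mul, mul_comm (e _)]
  exact IsHomogeneous.prod _ _ _ fun i _ => (ha i).pow (e i)

theorem IsWeightedHomogeneous.isHomogeneous_aeval (ha : ∀ i, (a i).IsHomogeneous (w i))
    {P : MvPolynomial σ R} {m : ℕ} (hP : P.IsWeightedHomogeneous w m) :
    (aeval a P).IsHomogeneous m := by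
  rw [P.as_sum, map_sum]
  refine IsHomogeneous.sum _ _ _ fun e he => ?_
  simpa only [hP (mem_support_iff.mp he)] using isHomogeneous_aeval_monomial ha e (coeff e P)

theorem coeff_aeval_weightedHomogeneousComponent (ha : ∀ i, (a i).IsHomogeneous (w i))
    (P : MvPolynomial σ R) (d : τ →₀ ℕ) :
    coeff d (aeval a (weightedHomogeneousComponent w d.degree P)) = coeff d (aeval a P) := by
  classical
  conv_rhs => rw [P.as_sum]
  rw [weightedHomogeneousComponent_apply, map_sum, map_sum, coeff_sum, coeff_sum]
  refine Finset.sum_filter_of_ne fun e _ he => ?_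
  by_contra hne
  exact he ((isHomogeneous_aeval_monomial ha e _).coeff_eq_zero (Ne.symm hne))

end MvPolynomial

theorem MvPolynomial.aeval_esymm_fin_injective (R : Type*) [CommRing R] (n : ℕ) :
    Function.Injective (aeval (R := R) fun i : Fin n => esymm (Fin n) R (i + 1)) :=
  fun p q hpq => esymmAlgHom_fin_injective R le_rfl
    (Subtype.ext (by simpa only [esymmAlgHom_apply] using hpq))

section
variable {R σ τ : Type*} [CommRing R] [Fintype σ] [DecidableEq σ] {a : σ → MvPolynomial τ R}

theorem coeff_substPowerSeries (f : MvPowerSeries σ R) (d : τ →₀ ℕ) :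
    MvPowerSeries.coeff d (substPowerSeries a f) =
      coeff d (aeval a (MvPowerSeries.trunc' R (equivFunOnFinite.symm fun _ => d.degree) f)) := by
  rw [MvPowerSeries.trunc', MvPowerSeries.truncFinset_apply, map_sum, coeff_sum]
  refine Finset.sum_congr rfl fun e _ => ?_
  rw [aeval_monomial, algebraMap_eq, coeff_C_mul, Finsupp.prod_fintype _ _ (fun _ => pow_zero _)]

theorem substPowerSeries_sub (f g : MvPowerSeries σ R) :
    substPowerSeries a (f - g) = substPowerSeries a f - substPowerSeries a g := by
  ext d
  simp only [map_sub, coeff_substPowerSeries, coeff_sub]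

variable {w : σ → ℕ}

theorem aeval_weightedHomogeneousComponent_trunc'_eq_zero
    (ha : ∀ i, (a i).IsHomogeneous (w i)) {f : MvPowerSeries σ R}
    (hf : substPowerSeries a f = 0) (m : ℕ) :
    aeval a (weightedHomogeneousComponent w m
      (MvPowerSeries.trunc' R (equivFunOnFinite.symm fun _ => m) f)) = 0 := by
  ext d
  rw [coeff_zero]
  by_cases hd : d.degree = m
  · subst hd
    rw [coeff_aeval_weightedHomogeneousComponent ha, ← coeff_substPowerSeries, hf, map_zero]
  · exact ((weightedHomogeneousComponent_isWeightedHomogeneous m _).isHomogeneous_aeval ha)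
      |>.coeff_eq_zero hd

theorem substPowerSeries_injective (hw : ∀ i, w i ≠ 0) (ha : ∀ i, (a i).IsHomogeneous (w i))
    (hinj : Function.Injective (aeval (R := R) a)) : Function.Injective (substPowerSeries a) := by
  intro f g hfg
  rw [← sub_eq_zero] at hfg ⊢
  rw [← substPowerSeries_sub] at hfg
  ext e
  set B : σ →₀ ℕ := equivFunOnFinite.symm fun _ => weight w e
  have he : e ≤ B := fun i => le_weight w (hw i) e
  set Q := weightedHomogeneousComponent w (weight w e) (MvPowerSeries.trunc' R B (f - g))
  have hQ : Q = 0 := (injective_iff_map_eq_zero _).mp hinj _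
    (aeval_weightedHomogeneousComponent_trunc'_eq_zero ha hfg _)
  calc MvPowerSeries.coeff e (f - g) = coeff e Q := by
        rw [coeff_weightedHomogeneousComponent, if_pos rfl, MvPowerSeries.coeff_trunc', if_pos he]
    _ = MvPowerSeries.coeff e 0 := by rw [hQ, coeff_zero, map_zero]

end

/-- The substitution ring homomorphism R[[c₁, …, cₙ]] → R[[t₁, …, tₙ]] sending cᵢ to the
i-th elementary symmetric polynomial eᵢ(t₁, …, tₙ) (for 1 ≤ i ≤ n) is injective. -/
theorem subst_esymm_injective (R : Type*) [CommRing R] (n : ℕ) :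
    Function.Injective (substPowerSeries
      (fun i : Fin n => MvPolynomial.esymm (Fin n) R (i.1 + 1))) :=
  substPowerSeries_injective (w := fun i => i.1 + 1) (fun _ => Nat.succ_ne_zero _)
    (fun _ => isHomogeneous_esymm _) (aeval_esymm_fin_injective R n)
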